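/- Let d be a positive integer and let G : ℝ^d × ℝ^d → ℂ be ℤ^d-periodic in its first variable: G(z+γ, η) = G(z, η) for all γ ∈ ℤ^d. For m ∈ ℤ^d define Φ_m : ℝ^d × ℝ^d → ℂ by Φ_m(x,y) := 2^{−d} ∑_{κ* ∈ {0,1}^d} e^{πi κ*·(x−y)} ∑_{κ ∈ {0,1}^d} e^{πi κ*·κ} G((x+y+κ)/2, m + κ*/2). Then Φ_m(x+α, y+β) = Φ_m(x,y) for all α, β ∈ ℤ^d and all x, y ∈ ℝ^d. -/
import Mathlib


/-- `e(s) = exp(2πis)`. -/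
noncomputable def ee (s : ℝ) : ℂ := Complex.exp (2 * Real.pi * Complex.I * s)


lemma ee_add (s t : ℝ) : ee (s + t) = ee s * ee t := by
  unfold ee; rw [← Complex.exp_add]; push_cast; ring_nf

lemma ee_int (n : ℤ) : ee (n : ℝ) = 1 := by
  unfold ee
  have := Complex.exp_int_mul_two_pi_mul_I n
  rw [← this]; push_cast; ring_nf

lemma aux2 (k : Fin 2) (a : ℤ) :
    ∃ g : ℤ, (((k + (if Even a then (0:Fin 2) else 1)).val : ℕ) : ℝ)
      = ((k.val : ℕ) : ℝ) + (a : ℝ) - 2 * (g : ℝ) := by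
  rcases Int.even_or_odd a with ⟨t, ht⟩ | ⟨t, ht⟩
  · refine ⟨t, ?_⟩
    have hev : Even a := ⟨t, ht⟩
    rw [if_pos hev, add_zero]
    subst ht; push_cast; ring
  · have hod : ¬ Even a := by rw [Int.even_iff]; omega
    rw [if_neg hod]
    have hk : k = 0 ∨ k = 1 := by revert k; decide
    rcases hk with hk | hk <;> subst hk
    · refine ⟨t, ?_⟩
      subst ht; push_cast [show ((0:Fin 2) + 1 : Fin 2) = 1 from rfl]; norm_num
    · refine ⟨t + 1, ?_⟩
      subst ht
      rw [show ((1:Fin 2) + 1 : Fin 2) = 0 from rfl]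
      show ((0:ℕ):ℝ) = _
      push_cast [Fin.val_one]; ring

/-- the toroidal amplitude
`Φ_m(x,y) = 2^{-d} ∑_{κ*∈{0,1}^d} e^{πi κ*·(x-y)} ∑_{κ∈{0,1}^d} e^{πi κ*·κ} G((x+y+κ)/2, m+κ*/2)`
built from a symbol `G` that is `ℤ^d`-periodic in its first variable is `ℤ^d × ℤ^d`-periodic. -/
theorem statement15 (d : ℕ) (hd : 0 < d)
    (G : ((Fin d → ℝ) × (Fin d → ℝ)) → ℂ)
    (hper : ∀ (z η : Fin d → ℝ) (γ : Fin d → ℤ), G (z + fun i => (γ i : ℝ), η) = G (z, η))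
    (Φ : (Fin d → ℤ) → (Fin d → ℝ) → (Fin d → ℝ) → ℂ)
    (hΦ : ∀ (m : Fin d → ℤ) (x y : Fin d → ℝ),
      Φ m x y = ((2 : ℂ) ^ d)⁻¹ *
        ∑ κs : Fin d → Fin 2,
          ee ((∑ j, ((κs j : ℕ) : ℝ) * (x j - y j)) / 2) *
            ∑ κ : Fin d → Fin 2,
              ee ((∑ j, ((κs j : ℕ) : ℝ) * ((κ j : ℕ) : ℝ)) / 2) *
                G ((2:ℝ)⁻¹ • (x + y + fun j => ((κ j : ℕ) : ℝ)),
                   fun j => (m j : ℝ) + ((κs j : ℕ) : ℝ) / 2)) :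
    ∀ (m : Fin d → ℤ) (x y : Fin d → ℝ) (α β : Fin d → ℤ),
      Φ m (x + fun i => (α i : ℝ)) (y + fun i => (β i : ℝ)) = Φ m x y := by
  intro m x y α β
  rw [hΦ, hΦ]
  congr 1
  apply Finset.sum_congr rfl
  intro κs _
  rw [Finset.mul_sum, Finset.mul_sum]
  set c : Fin d → Fin 2 := fun j => if Even (α j + β j) then (0:Fin 2) else 1 with hc
  refine (Fintype.sum_equiv (Equiv.addRight c) _ _ fun κ => ?_).symm
  simp only [Equiv.coe_addRight, Pi.add_apply]
  have hex : ∀ j : Fin d, ∃ g : ℤ,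
      (((κ j + c j).val : ℝ) = ((κ j).val : ℝ) + ((α j + β j : ℤ) : ℝ) - 2 * (g : ℝ)) := by
    intro j
    simpa [hc] using aux2 (κ j) (α j + β j)
  choose γ hγ using hex
  have hγ' : ∀ j, (((κ j + c j).val : ℝ)
      = ((κ j).val : ℝ) + (α j : ℝ) + (β j : ℝ) - 2 * (γ j : ℝ)) := by
    intro j; rw [hγ j]; push_cast; ring
  have hGarg : (2:ℝ)⁻¹ • ((x + fun i => (α i : ℝ)) + (y + fun i => (β i : ℝ))
        + fun j => ((κ j + c j).val : ℝ))
      = ((2:ℝ)⁻¹ • (x + y + fun j => ((κ j).val : ℝ)))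
        + fun i => ((α i + β i - γ i : ℤ) : ℝ) := by
    funext j
    simp only [Pi.smul_apply, Pi.add_apply, smul_eq_mul]
    rw [hγ' j]; push_cast; ring
  have hG : G ((2:ℝ)⁻¹ • ((x + fun i => (α i : ℝ)) + (y + fun i => (β i : ℝ))
        + fun j => ((κ j + c j).val : ℝ)),
        fun j => (m j : ℝ) + ((κs j).val : ℝ) / 2)
      = G ((2:ℝ)⁻¹ • (x + y + fun j => ((κ j).val : ℝ)),
        fun j => (m j : ℝ) + ((κs j).val : ℝ) / 2) := by
    rw [hGarg, hper]
  rw [hG]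
  rw [← mul_assoc, ← mul_assoc]
  congr 1
  rw [← ee_add, ← ee_add]
  set N : ℤ := ∑ j, ((κs j).val : ℤ) * (α j - γ j) with hN
  have hsum : (∑ j, ((κs j).val : ℝ) * ((x j + (α j : ℝ)) - (y j + (β j : ℝ))))
        + (∑ j, ((κs j).val : ℝ) * (((κ j + c j).val : ℝ)))
      = (∑ j, ((κs j).val : ℝ) * (x j - y j))
        + (∑ j, ((κs j).val : ℝ) * (((κ j).val : ℝ))) + 2 * (N : ℝ) := by
    have hNr : (N : ℝ) = ∑ j, ((κs j).val : ℝ) * ((α j : ℝ) - (γ j : ℝ)) := by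
      rw [hN]; push_cast; ring
    rw [hNr, ← Finset.sum_add_distrib, ← Finset.sum_add_distrib, Finset.mul_sum,
      ← Finset.sum_add_distrib]
    apply Finset.sum_congr rfl
    intro j _
    rw [hγ' j]; ring
  have harg : (∑ j, ((κs j).val : ℝ) * ((x j + (α j : ℝ)) - (y j + (β j : ℝ)))) / 2
        + (∑ j, ((κs j).val : ℝ) * (((κ j + c j).val : ℝ))) / 2
      = ((∑ j, ((κs j).val : ℝ) * (x j - y j)) / 2
        + (∑ j, ((κs j).val : ℝ) * (((κ j).val : ℝ))) / 2) + (N : ℝ) := by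
    linarith
  rw [harg, ee_add (_ + _) ((N : ℤ) : ℝ), ee_int, mul_one]
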